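/- arXiv:2306.10390 — 3 statements merged into one kernel-verified Lean document; each statement's English description precedes it below -/
import Mathlib

section
/- Andréief's identity: For a positive (probability) measure μ on a real interval I and N ≥ 1, one has (1/N!) ∫_I … ∫_I ∏_{1≤i<j≤N} (u_j − u_i)² μ(du_1)⋯μ(du_N) = det{ ∫_I u^{k+ℓ} μ(du) }_{k,ℓ=0}^{N−1}, provided all moments ∫_I u^m μ(du) for 0 ≤ m ≤ 2N−2 are finite. -/
/-!
Expanding both Vandermonde determinants in `∏_{i<j} (u_j - u_i)² = det(u_i^k)²` over permutations,
every term is a product of one-variable functions, so Fubini turns its integral into a product of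
moments `m_{σ i + τ i}`. Reindexing the double sum over `(σ, τ)` by `τ σ⁻¹` collapses it to
`N!` copies of the Hankel determinant `det (m_{k+ℓ})`.
-/

open MeasureTheory Equiv Finset

namespace Matrix

variable {n R : Type*} [Fintype n] [DecidableEq n] [CommRing R]

theorem det_mul_det_eq_sum_sum_perm (A B : Matrix n n R) :
    A.det * B.det = ∑ σ : Perm n, ∑ τ : Perm n,
      (Perm.sign σ * Perm.sign τ : R) * ∏ i, A (σ i) i * B (τ i) i := by
  simp only [det_apply', sum_mul_sum, prod_mul_distrib, mul_mul_mul_comm]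

theorem sum_perm_sign_mul_prod_apply_comp (σ : Perm n) (M : Matrix n n R) :
    ∑ τ : Perm n, (Perm.sign τ : R) * ∏ i, M (σ i) (τ i) = Perm.sign σ * M.det := by
  rw [← det_permute, ← det_transpose, det_apply']
  rfl

theorem sum_sum_perm_sign_mul_prod_apply (M : Matrix n n R) :
    ∑ σ : Perm n, ∑ τ : Perm n, (Perm.sign σ * Perm.sign τ : R) * ∏ i, M (σ i) (τ i)
      = (Fintype.card n).factorial * M.det := by
  have hsign (σ : Perm n) : (Perm.sign σ * Perm.sign σ : R) = 1 := by
    rw [← Int.cast_mul, ← Units.val_mul, Int.units_mul_self, Units.val_one, Int.cast_one]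
  simp_rw [mul_assoc, ← mul_sum, sum_perm_sign_mul_prod_apply_comp, ← mul_assoc, hsign, one_mul,
    sum_const, card_univ, Fintype.card_perm, nsmul_eq_mul]

end Matrix

open Matrix

theorem integral_det_mul_det_pi {n α 𝕜 : Type*} [Fintype n] [DecidableEq n] [RCLike 𝕜]
    [MeasurableSpace α] (μ : Measure α) [SigmaFinite μ] (f g : n → α → 𝕜)
    (hfg : ∀ k l, Integrable (fun x => f k x * g l x) μ) :
    ∫ x : n → α, (of fun k i => f k (x i)).det * (of fun k i => g k (x i)).det
        ∂(Measure.pi fun _ => μ)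
      = (Fintype.card n).factorial * (of fun k l => ∫ x, f k x * g l x ∂μ).det := by
  have hprod (σ τ : Perm n) :
      Integrable (fun x : n → α => ∏ i, f (σ i) (x i) * g (τ i) (x i)) (Measure.pi fun _ => μ) :=
    Integrable.fintype_prod fun i => hfg (σ i) (τ i)
  simp_rw [det_mul_det_eq_sum_sum_perm, of_apply]
  rw [integral_finsetSum _ fun σ _ => integrable_finsetSum _ fun τ _ => (hprod σ τ).const_mul _]
  refine (sum_congr rfl fun σ _ => ?_).trans (sum_sum_perm_sign_mul_prod_apply _)
  rw [integral_finsetSum _ fun τ _ => (hprod σ τ).const_mul _]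
  refine sum_congr rfl fun τ _ => ?_
  rw [integral_const_mul, integral_fintype_prod_eq_prod (fun i x => f (σ i) x * g (τ i) x)]
  rfl

theorem prod_Ioi_sub_sq_eq_det_mul_det {R : Type*} [CommRing R] {N : ℕ} (u : Fin N → R) :
    ∏ i : Fin N, ∏ j ∈ Ioi i, (u j - u i) ^ 2
      = (of fun k i : Fin N => u i ^ (k : ℕ)).det * (of fun k i : Fin N => u i ^ (k : ℕ)).det := by
  have hV : (of fun k i : Fin N => u i ^ (k : ℕ)) = (vandermonde u)ᵀ := rfl
  rw [← sq, hV, det_transpose, det_vandermonde]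
  simp_rw [prod_pow]

theorem andreief_identity_general (N : ℕ)
    (μ : Measure ℝ) [IsProbabilityMeasure μ]
    (hmom : ∀ m : ℕ, m ≤ 2 * N - 2 → Integrable (fun u : ℝ => u ^ m) μ) :
    ((N.factorial : ℝ))⁻¹ *
        ∫ u : Fin N → ℝ, (∏ i : Fin N, ∏ j ∈ Finset.Ioi i, (u j - u i) ^ 2)
          ∂(Measure.pi fun _ => μ)
      = Matrix.det (Matrix.of fun k ℓ : Fin N =>
          ∫ u : ℝ, u ^ ((k : ℕ) + (ℓ : ℕ)) ∂μ) := by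
  have hmom' (k ℓ : Fin N) : Integrable (fun u : ℝ => u ^ (k : ℕ) * u ^ (ℓ : ℕ)) μ := by
    simp_rw [← pow_add]
    exact hmom _ (by omega)
  simp_rw [prod_Ioi_sub_sq_eq_det_mul_det]
  rw [integral_det_mul_det_pi μ _ _ hmom', Fintype.card_fin,
    inv_mul_cancel_left₀ (Nat.cast_ne_zero.mpr N.factorial_ne_zero)]
  simp_rw [← pow_add]

/-- Andréief's identity. -/
theorem andreief_identity (N : ℕ) (hN : 1 ≤ N) (I : Set ℝ) (hI : I.OrdConnected)
    (μ : Measure ℝ) [IsProbabilityMeasure μ] (hsupp : μ Iᶜ = 0)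
    (hmom : ∀ m : ℕ, m ≤ 2 * N - 2 → Integrable (fun u : ℝ => u ^ m) μ) :
    ((N.factorial : ℝ))⁻¹ *
        ∫ u : Fin N → ℝ, (∏ i : Fin N, ∏ j ∈ Finset.Ioi i, (u j - u i) ^ 2)
          ∂(Measure.pi fun _ => μ)
      = Matrix.det (Matrix.of fun k ℓ : Fin N =>
          ∫ u : ℝ, u ^ ((k : ℕ) + (ℓ : ℕ)) ∂μ) :=
  andreief_identity_general N μ hmom
end

section
/- Heine's identity on the circle: For a probability measure μ on the unit circle S¹ and N ≥ 1, (1/N!) ∫_{S¹}⋯∫_{S¹} ∏_{i<j} |u_i − u_j|² μ(du_1)⋯μ(du_N) = det{ ∫_{S¹} u^{k−ℓ} μ(du) }_{k,ℓ=0}^{N−1}, i.e. the generalized Toeplitz determinant of the Fourier coefficients of μ. -/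
/-!
On the unit circle `conj u = u⁻¹`, so `∏_{i<j} |u_i - u_j|²` is the product of the Vandermonde
determinants `det (u_i ^ k)` and `det (conj u_i ^ l)`, and `u ^ k * conj u ^ l = u ^ (k - l)`.
Expanding both determinants over permutations, each term is a product of functions of single
coordinates, so Fubini integrates it to a product of moments; regrouping the double sum over
permutations gives `N!` copies of the Toeplitz determinant (Andréief's identity).
-/

open MeasureTheory Matrix Equiv Finset ComplexConjugate

namespace Matrix

variable {n R : Type*} [Fintype n] [DecidableEq n] [CommRing R]

theorem det_of_apply_eq_sum_sign_prod {α : Type*} (f : n → α → R) (x : n → α) :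
    (of fun i k => f k (x i)).det = ∑ σ : Perm n, Perm.sign σ • ∏ i, f (σ i) (x i) := by
  rw [← det_transpose, det_apply]
  rfl

-- Substituting `σ = π * τ` turns each inner sum into `det c`.
theorem sum_sum_sign_mul_sign_prod_eq_factorial_smul_det (c : Matrix n n R) :
    ∑ σ : Perm n, ∑ τ : Perm n, (Perm.sign σ * Perm.sign τ) • ∏ i, c (σ i) (τ i)
      = (Fintype.card n).factorial • c.det := by
  have hinner : ∀ τ : Perm n,
      ∑ σ : Perm n, (Perm.sign σ * Perm.sign τ) • ∏ i, c (σ i) (τ i) = c.det := by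
    intro τ
    rw [det_apply, ← Equiv.sum_comp (Equiv.mulRight τ)]
    refine sum_congr rfl fun π _ => ?_
    simp only [coe_mulRight, Perm.sign_mul, mul_assoc, Int.units_mul_self, mul_one,
      Perm.mul_apply]
    rw [Equiv.prod_comp τ fun j => c (π j) j]
  rw [sum_comm, sum_congr rfl fun τ _ => hinner τ, sum_const, card_univ, Fintype.card_perm]

end Matrix

namespace MeasureTheory

/-- Andréief's identity. -/
theorem integral_det_mul_det_eq_factorial_mul_det {n α 𝕜 : Type*} [Fintype n] [DecidableEq n]
    [MeasurableSpace α] [RCLike 𝕜] (μ : Measure α) [SigmaFinite μ] (f g : n → α → 𝕜)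
    (hfg : ∀ k l, Integrable (fun x => f k x * g l x) μ) :
    ∫ x : n → α, (of fun i k => f k (x i)).det * (of fun i l => g l (x i)).det
        ∂(Measure.pi fun _ => μ)
      = ((Fintype.card n).factorial : 𝕜) * (of fun k l => ∫ x, f k x * g l x ∂μ).det := by
  have hprod : ∀ σ τ : Perm n,
      ∫ x : n → α, ∏ i, f (σ i) (x i) * g (τ i) (x i) ∂(Measure.pi fun _ => μ)
        = ∏ i, ∫ x, f (σ i) x * g (τ i) x ∂μ :=
    fun σ τ => integral_fintype_prod_eq_prod fun i x => f (σ i) x * g (τ i) x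
  have hint : ∀ σ τ : Perm n,
      Integrable (fun x : n → α => ∏ i, f (σ i) (x i) * g (τ i) (x i)) (Measure.pi fun _ => μ) :=
    fun σ τ => Integrable.fintype_prod fun i => hfg (σ i) (τ i)
  simp_rw [det_of_apply_eq_sum_sign_prod, sum_mul_sum, smul_mul_smul_comm, ← prod_mul_distrib]
  rw [← nsmul_eq_mul, ← sum_sum_sign_mul_sign_prod_eq_factorial_smul_det]
  simp_rw [Units.smul_def, zsmul_eq_mul, of_apply]
  rw [integral_finsetSum _ fun σ _ => integrable_finsetSum _ fun τ _ => (hint σ τ).const_mul _]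
  refine sum_congr rfl fun σ _ => ?_
  rw [integral_finsetSum _ fun τ _ => (hint σ τ).const_mul _]
  simp_rw [integral_const_mul, hprod]

end MeasureTheory

namespace Complex

theorem ofReal_prod_norm_sub_sq {N : ℕ} (u : Fin N → ℂ) :
    ((∏ i : Fin N, ∏ j ∈ Ioi i, ‖u i - u j‖ ^ 2 : ℝ) : ℂ)
      = (vandermonde u).det * (vandermonde (conj ∘ u)).det := by
  simp_rw [det_vandermonde, ← prod_mul_distrib, Function.comp_apply, ← map_sub, mul_conj,
    normSq_eq_norm_sq]
  push_cast
  simp_rw [norm_sub_rev]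

theorem pow_mul_conj_pow_of_norm_eq_one {z : ℂ} (hz : ‖z‖ = 1) (k l : ℕ) :
    z ^ k * conj z ^ l = z ^ ((k : ℤ) - l) := by
  rw [← inv_eq_conj hz, inv_pow, zpow_sub₀ (norm_ne_zero_iff.mp (hz ▸ one_ne_zero)),
    zpow_natCast, zpow_natCast, div_eq_mul_inv]

end Complex

theorem heine_identity_general (N : ℕ) (μ : Measure ℂ) [IsProbabilityMeasure μ]
    (hsupp : μ (Metric.sphere (0 : ℂ) 1)ᶜ = 0) :
    (((N.factorial : ℝ))⁻¹ *
        ∫ u : Fin N → ℂ, (∏ i : Fin N, ∏ j ∈ Finset.Ioi i, ‖u i - u j‖ ^ 2)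
          ∂(Measure.pi fun _ => μ) : ℂ)
      = Matrix.det (Matrix.of fun k ℓ : Fin N =>
          ∫ u : ℂ, u ^ ((k : ℤ) - (ℓ : ℤ)) ∂μ) := by
  have hcircle : ∀ᵐ z ∂μ, ‖z‖ = 1 := by
    filter_upwards [measure_eq_zero_iff_ae_notMem.mp hsupp] with z hz
    simpa using hz
  have hint : ∀ k l : Fin N, Integrable (fun z : ℂ => z ^ (k : ℕ) * conj z ^ (l : ℕ)) μ :=
    fun k l => (integrable_const (1 : ℝ)).mono' (by fun_prop) <| hcircle.mono fun z hz => by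
      simp [hz]
  have hmoment : ∀ k l : Fin N,
      ∫ z, z ^ (k : ℕ) * conj z ^ (l : ℕ) ∂μ = ∫ z, z ^ ((k : ℤ) - l) ∂μ :=
    fun k l => integral_congr_ae <| hcircle.mono fun z hz =>
      Complex.pow_mul_conj_pow_of_norm_eq_one hz k l
  have hintegral : ∫ u : Fin N → ℂ, ((∏ i : Fin N, ∏ j ∈ Ioi i, ‖u i - u j‖ ^ 2 : ℝ) : ℂ)
        ∂(Measure.pi fun _ => μ)
      = N.factorial * (of fun k l : Fin N => ∫ z, z ^ (k : ℕ) * conj z ^ (l : ℕ) ∂μ).det := by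
    simp_rw [Complex.ofReal_prod_norm_sub_sq]
    have := integral_det_mul_det_eq_factorial_mul_det μ (fun (k : Fin N) z => z ^ (k : ℕ))
      (fun l z => conj z ^ (l : ℕ)) hint
    rwa [Fintype.card_fin] at this
  rw [← integral_complex_ofReal, hintegral]
  simp_rw [hmoment]
  push_cast
  rw [inv_mul_cancel_left₀ (Nat.cast_ne_zero.mpr N.factorial_ne_zero)]

/-- Heine's identity on the unit circle. -/
theorem heine_identity (N : ℕ) (hN : 1 ≤ N) (μ : Measure ℂ) [IsProbabilityMeasure μ]
    (hsupp : μ (Metric.sphere (0 : ℂ) 1)ᶜ = 0) :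
    (((N.factorial : ℝ))⁻¹ *
        ∫ u : Fin N → ℂ, (∏ i : Fin N, ∏ j ∈ Finset.Ioi i, ‖u i - u j‖ ^ 2)
          ∂(Measure.pi fun _ => μ) : ℂ)
      = Matrix.det (Matrix.of fun k ℓ : Fin N =>
          ∫ u : ℂ, u ^ ((k : ℤ) - (ℓ : ℤ)) ∂μ) :=
  heine_identity_general N μ hsupp
end

section
/- de Bruijn's identity, β = 4: For a probability measure μ on an interval I ⊆ ℝ (with μ absolutely continuous so that derivatives make sense and moments finite), (1/N!) ∫_I⋯∫_I ∏_{i<j} (u_j − u_i)⁴ μ(du_1)⋯μ(du_N) = pf{ B_{kℓ} }_{k,ℓ=0}^{2N−1}, where B_{kℓ} = ∫_I (u^k (u^ℓ)' − u^ℓ (u^k)') μ(du) = (ℓ − k) ∫_I u^{k+ℓ−1} μ(du). -/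
/-!
The integrand `∏_{i<j} (u_j - u_i)^4` is the determinant of the confluent Vandermonde matrix,
whose rows are `(u_a^k)_k` and their derivatives `(k u_a^(k-1))_k`. This comes from the
Vandermonde determinant in `2N` variables `x_a, y_a`: subtracting row `x_a` from row `y_a` and
dividing it by `y_a - x_a` leaves a matrix of divided differences, whose determinant is then a
polynomial identity that may be specialised at `y = x`.

Expanding that determinant over permutations and integrating coordinatewise gives
`∑_σ sgn σ ∏_a C_{σ(2a), σ(2a+1)}` with `C_{kℓ} = ∫ u^k (u^ℓ)' dμ`. This sum changes sign when
the two entries of one pair are exchanged, so replacing `C` by `B = C - Cᵀ` multiplies it by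
`2^N`, which is the normalisation of the Pfaffian.
-/

open MeasureTheory

noncomputable def pfaffian {n : ℕ} (A : Matrix (Fin (2 * n)) (Fin (2 * n)) ℝ) : ℝ :=
  ((2 : ℝ) ^ n * n.factorial)⁻¹ *
    ∑ σ : Equiv.Perm (Fin (2 * n)), (Equiv.Perm.sign σ : ℤ) *
      ∏ i : Fin n, A (σ ⟨2 * i.1, by have := i.isLt; omega⟩)
                     (σ ⟨2 * i.1 + 1, by have := i.isLt; omega⟩)

open Finset Matrix

namespace DeBruijn

variable {N : ℕ}

def pairIdx : Fin N × Fin 2 ≃ Fin (2 * N) where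
  toFun p := ⟨2 * p.1 + p.2, by omega⟩
  invFun i := (⟨i / 2, by omega⟩, ⟨i % 2, by omega⟩)
  left_inv p := by ext <;> dsimp only <;> omega
  right_inv i := by ext; dsimp only; omega

@[simp] lemma pairIdx_val (p : Fin N × Fin 2) : (pairIdx p : ℕ) = 2 * p.1 + p.2 := rfl

lemma pairIdx_lt_pairIdx {p q : Fin N × Fin 2} :
    pairIdx p < pairIdx q ↔ p.1 < q.1 ∨ p.1 = q.1 ∧ p.2 < q.2 := by
  simp only [Fin.lt_def, Fin.ext_iff, pairIdx_val]
  omega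

theorem prod_pairIdx {M : Type*} [CommMonoid M] (f : Fin (2 * N) → M) :
    ∏ i, f i = ∏ a, f (pairIdx (a, 0)) * f (pairIdx (a, 1)) := by
  simp [← pairIdx.prod_comp, Fintype.prod_prod_type, Fin.prod_univ_two]

theorem prod_Ioi_pairIdx {M : Type*} [CommMonoid M] (f : Fin (2 * N) → Fin (2 * N) → M) :
    ∏ i, ∏ j ∈ Ioi i, f i j = ∏ a, (f (pairIdx (a, 0)) (pairIdx (a, 1)) *
      ∏ b ∈ Ioi a, ∏ s, ∏ t, f (pairIdx (a, s)) (pairIdx (b, t))) := by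
  have hblock (a b : Fin N) : ∏ s, ∏ t,
      (if pairIdx (a, s) < pairIdx (b, t) then f (pairIdx (a, s)) (pairIdx (b, t)) else 1) =
      (if a = b then f (pairIdx (a, 0)) (pairIdx (a, 1)) else 1) *
        if a < b then ∏ s, ∏ t, f (pairIdx (a, s)) (pairIdx (b, t)) else 1 := by
    rcases lt_trichotomy a b with h | rfl | h
    · simp [pairIdx_lt_pairIdx, h, h.ne]
    · simp [pairIdx_lt_pairIdx, Fin.prod_univ_two]
    · simp [pairIdx_lt_pairIdx, h.not_gt, h.ne']
  calc ∏ i, ∏ j ∈ Ioi i, f i j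
      = ∏ p, ∏ q, if pairIdx p < pairIdx q then f (pairIdx p) (pairIdx q) else 1 := by
        simp_rw [← filter_lt_eq_Ioi, prod_filter]
        rw [← pairIdx.prod_comp]
        exact prod_congr rfl fun p _ => (pairIdx.prod_comp _).symm
    _ = ∏ a, ∏ b, ∏ s, ∏ t,
          if pairIdx (a, s) < pairIdx (b, t) then f (pairIdx (a, s)) (pairIdx (b, t)) else 1 := by
        simp_rw [Fintype.prod_prod_type]
        exact prod_congr rfl fun a _ => prod_comm
    _ = _ := by
        simp_rw [hblock, prod_mul_distrib, prod_ite_eq, if_pos (mem_univ _), prod_ite,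
          prod_const_one, mul_one, filter_lt_eq_Ioi]

@[elab_as_elim]
lemma pairIdx_induction {P : Fin (2 * N) → Prop} (fst : ∀ a, P (pairIdx (a, 0)))
    (snd : ∀ a, P (pairIdx (a, 1))) (i : Fin (2 * N)) : P i := by
  obtain ⟨⟨a, s⟩, rfl⟩ := pairIdx.surjective i
  fin_cases s
  exacts [fst a, snd a]

section PairRows

variable {R : Type*}

def pairRows (f g : Fin N → Fin (2 * N) → R) : Matrix (Fin (2 * N)) (Fin (2 * N)) R :=
  of fun i => ![f, g] (pairIdx.symm i).2 (pairIdx.symm i).1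

@[simp] lemma pairRows_fst (f g : Fin N → Fin (2 * N) → R) (a : Fin N) :
    pairRows f g (pairIdx (a, 0)) = f a := by
  ext k
  simp [pairRows]

@[simp] lemma pairRows_snd (f g : Fin N → Fin (2 * N) → R) (a : Fin N) :
    pairRows f g (pairIdx (a, 1)) = g a := by
  ext k
  simp [pairRows]

lemma pairRows_map {S : Type*} (φ : R → S) (f g : Fin N → Fin (2 * N) → R) :
    (pairRows f g).map φ = pairRows (fun a k => φ (f a k)) (fun a k => φ (g a k)) := by
  ext i k
  induction i using pairIdx_induction <;> simp

variable [CommRing R]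

lemma vandermonde_comp_pairIdx_symm (z : Fin N × Fin 2 → R) :
    vandermonde (z ∘ pairIdx.symm) =
      pairRows (fun a k => z (a, 0) ^ (k : ℕ)) (fun a k => z (a, 1) ^ (k : ℕ)) := by
  ext i k
  induction i using pairIdx_induction <;> simp

lemma det_vandermonde_comp_pairIdx_symm (z : Fin N × Fin 2 → R) :
    (vandermonde (z ∘ pairIdx.symm)).det =
      (∏ a, (z (a, 1) - z (a, 0))) * ∏ a, ∏ b ∈ Ioi a, ∏ s, ∏ t, (z (b, t) - z (a, s)) := by
  simp [det_vandermonde, prod_Ioi_pairIdx, prod_mul_distrib]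

def pairShift : Matrix (Fin (2 * N)) (Fin (2 * N)) R :=
  pairRows 0 fun a => Pi.single (pairIdx (a, 0)) 1

lemma pairShift_mul_pairRows (f g : Fin N → Fin (2 * N) → R) :
    pairShift * pairRows f g = pairRows 0 f := by
  ext i k
  induction i using pairIdx_induction <;>
    simp [pairShift, mul_apply, Pi.single_apply]

lemma det_one_sub_pairShift : (1 - pairShift : Matrix (Fin (2 * N)) (Fin (2 * N)) R).det = 1 := by
  have hlower : (1 - pairShift : Matrix (Fin (2 * N)) (Fin (2 * N)) R).IsLowerTriangular := by
    intro i j (hij : i < j)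
    induction i using pairIdx_induction with
    | fst a => simp [pairShift, one_apply_ne hij.ne]
    | snd a =>
      have : j ≠ pairIdx (a, 0) := by
        rintro rfl
        exact absurd hij (by simp [pairIdx_lt_pairIdx])
      simp [pairShift, one_apply_ne hij.ne, this]
  rw [det_of_isLowerTriangular _ hlower]
  refine prod_eq_one fun i _ => ?_
  induction i using pairIdx_induction <;> simp [pairShift]

lemma det_pairRows_sub (f g : Fin N → Fin (2 * N) → R) :
    (pairRows f (g - f)).det = (pairRows f g).det := by
  have : pairRows f (g - f) = (1 - pairShift) * pairRows f g := by
    rw [sub_mul, one_mul, pairShift_mul_pairRows]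
    ext i k
    induction i using pairIdx_induction <;> simp
  rw [this, det_mul, det_one_sub_pairShift, one_mul]

lemma det_pairRows_smul (f g : Fin N → Fin (2 * N) → R) (c : Fin N → R) :
    (pairRows f (c • g)).det = (∏ a, c a) * (pairRows f g).det := by
  set d : Fin (2 * N) → R := fun i => ![1, c (pairIdx.symm i).1] (pairIdx.symm i).2
  have : pairRows f (c • g) = diagonal d * pairRows f g := by
    ext i k
    induction i using pairIdx_induction <;> simp [d, diagonal_mul]
  rw [this, det_mul, det_diagonal, prod_pairIdx]
  simp [d]

end PairRows

section Confluent

variable {R : Type*} [CommRing R]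

/-- Row `(a, 1)` is `(z (a, 1) ^ k - z (a, 0) ^ k) / (z (a, 1) - z (a, 0))`. -/
def divDiffMatrix (z : Fin N × Fin 2 → R) : Matrix (Fin (2 * N)) (Fin (2 * N)) R :=
  pairRows (fun a k => z (a, 0) ^ (k : ℕ))
    (fun a k => ∑ j ∈ range k, z (a, 1) ^ j * z (a, 0) ^ ((k : ℕ) - 1 - j))

lemma det_vandermonde_eq_mul_det_divDiffMatrix (z : Fin N × Fin 2 → R) :
    (vandermonde (z ∘ pairIdx.symm)).det =
      (∏ a, (z (a, 1) - z (a, 0))) * (divDiffMatrix z).det := by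
  rw [vandermonde_comp_pairIdx_symm, ← det_pairRows_sub, divDiffMatrix, ← det_pairRows_smul]
  congr
  ext a k
  simp [mul_comm (z (a, 1) - z (a, 0)), geom_sum₂_mul]

open MvPolynomial in
theorem det_divDiffMatrix_X :
    (divDiffMatrix (X : Fin N × Fin 2 → MvPolynomial (Fin N × Fin 2) ℤ)).det =
      ∏ a, ∏ b ∈ Ioi a, ∏ s, ∏ t, (X (b, t) - X (a, s)) := by
  have hne : ∏ a : Fin N, (X (a, 1) - X (a, 0) : MvPolynomial (Fin N × Fin 2) ℤ) ≠ 0 :=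
    prod_ne_zero_iff.2 fun a _ => sub_ne_zero.2 <| (X_injective (σ := Fin N × Fin 2)).ne (by simp)
  apply mul_left_cancel₀ hne
  rw [← det_vandermonde_eq_mul_det_divDiffMatrix, det_vandermonde_comp_pairIdx_symm]

open MvPolynomial in
theorem det_divDiffMatrix (z : Fin N × Fin 2 → R) :
    (divDiffMatrix z).det = ∏ a, ∏ b ∈ Ioi a, ∏ s, ∏ t, (z (b, t) - z (a, s)) := by
  have h := congrArg (eval₂Hom (Int.castRingHom R) z) det_divDiffMatrix_X
  rw [RingHom.map_det, RingHom.mapMatrix_apply, divDiffMatrix, pairRows_map] at h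
  simpa [divDiffMatrix, map_prod] using h

def confluentVandermonde (u : Fin N → R) : Matrix (Fin (2 * N)) (Fin (2 * N)) R :=
  pairRows (fun a k => u a ^ (k : ℕ)) (fun a k => (k : R) * u a ^ ((k : ℕ) - 1))

lemma divDiffMatrix_comp_fst (u : Fin N → R) :
    divDiffMatrix (fun p => u p.1) = confluentVandermonde u := by
  simp [divDiffMatrix, confluentVandermonde, geom_sum₂_self]

theorem det_confluentVandermonde (u : Fin N → R) :
    (confluentVandermonde u).det = ∏ a, ∏ b ∈ Ioi a, (u b - u a) ^ 4 := by
  rw [← divDiffMatrix_comp_fst, det_divDiffMatrix]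
  simp [← pow_mul]

end Confluent

section Pairing

variable {R : Type*} [CommRing R]

def pairingSum (C : Fin N → Matrix (Fin (2 * N)) (Fin (2 * N)) R) : R :=
  ∑ σ : Equiv.Perm (Fin (2 * N)),
    (Equiv.Perm.sign σ : ℤ) * ∏ a, C a (σ (pairIdx (a, 0))) (σ (pairIdx (a, 1)))

lemma pairingSum_update_sub (C : Fin N → Matrix (Fin (2 * N)) (Fin (2 * N)) R) (a : Fin N)
    (A B : Matrix (Fin (2 * N)) (Fin (2 * N)) R) :
    pairingSum (Function.update C a (A - B)) =
      pairingSum (Function.update C a A) - pairingSum (Function.update C a B) := by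
  simp only [pairingSum, ← sum_sub_distrib, ← mul_sub]
  refine sum_congr rfl fun σ _ => ?_
  have hrest (M : Matrix (Fin (2 * N)) (Fin (2 * N)) R) :
      ∏ b ∈ {a}ᶜ, Function.update C a M b (σ (pairIdx (b, 0))) (σ (pairIdx (b, 1))) =
        ∏ b ∈ {a}ᶜ, C b (σ (pairIdx (b, 0))) (σ (pairIdx (b, 1))) :=
    prod_congr rfl fun b hb => by rw [Function.update_of_ne (by simpa using hb)]
  simp only [Fintype.prod_eq_mul_prod_compl a, Function.update_self, hrest, Matrix.sub_apply,
    sub_mul]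

lemma pairingSum_update_transpose (C : Fin N → Matrix (Fin (2 * N)) (Fin (2 * N)) R) (a : Fin N) :
    pairingSum (Function.update C a (C a)ᵀ) = -pairingSum C := by
  set τ := Equiv.swap (pairIdx (a, 0)) (pairIdx (a, 1))
  rw [pairingSum, ← Equiv.sum_comp (Equiv.mulRight τ), pairingSum, ← sum_neg_distrib]
  refine sum_congr rfl fun σ _ => ?_
  have hsign : Equiv.Perm.sign (σ * τ) = -Equiv.Perm.sign σ := by
    rw [Equiv.Perm.sign_mul, Equiv.Perm.sign_swap (pairIdx.injective.ne (by simp))]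
    simp
  have hslot (b : Fin N) : Function.update C a (C a)ᵀ b (σ (τ (pairIdx (b, 0))))
      (σ (τ (pairIdx (b, 1)))) = C b (σ (pairIdx (b, 0))) (σ (pairIdx (b, 1))) := by
    rcases eq_or_ne b a with rfl | hb
    · simp [τ]
    · have hfix (s : Fin 2) : τ (pairIdx (b, s)) = pairIdx (b, s) :=
        Equiv.swap_apply_of_ne_of_ne (pairIdx.injective.ne (by simp [hb]))
          (pairIdx.injective.ne (by simp [hb]))
      simp [Function.update_of_ne hb, hfix]
  simp [hsign, hslot]

theorem pairingSum_sub_transpose (C : Matrix (Fin (2 * N)) (Fin (2 * N)) R) :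
    pairingSum (fun _ => C - Cᵀ) = 2 ^ N * pairingSum (fun _ => C) := by
  suffices h : ∀ t : Finset (Fin N),
      pairingSum (fun b => if b ∈ t then C - Cᵀ else C) = 2 ^ t.card * pairingSum (fun _ => C) by
    simpa using h univ
  intro t
  induction t using Finset.induction_on with
  | empty => simp
  | @insert a t ha ih =>
    set F := fun b => if b ∈ t then C - Cᵀ else C
    have hFa : F a = C := if_neg ha
    have hC : Function.update F a C = F := by
      rw [← hFa]
      exact Function.update_eq_self a F
    have hinsert : (fun b => if b ∈ insert a t then C - Cᵀ else C) = Function.update F a (C - Cᵀ) := by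
      ext1 b
      rcases eq_or_ne b a with rfl | hb <;> simp [F, Function.update_of_ne, *]
    rw [hinsert, pairingSum_update_sub, hC, show Cᵀ = (F a)ᵀ by rw [hFa],
      pairingSum_update_transpose, ih, card_insert_of_notMem ha, pow_succ]
    ring

end Pairing

theorem pfaffian_eq_pairingSum (A : Matrix (Fin (2 * N)) (Fin (2 * N)) ℝ) :
    pfaffian A = ((2 : ℝ) ^ N * N.factorial)⁻¹ * pairingSum (fun _ => A) :=
  rfl

lemma pow_mul_natCast_mul_pow_sub_one {R : Type*} [CommSemiring R] (v : R) (k l : ℕ) :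
    v ^ k * (l * v ^ (l - 1)) = l * v ^ (k + l - 1) := by
  cases l with
  | zero => simp
  | succ l => rw [Nat.add_sub_cancel, ← Nat.add_assoc, Nat.add_sub_cancel, pow_add]; ring

lemma det_confluentVandermonde_eq_sum {R : Type*} [CommRing R] (u : Fin N → R) :
    (confluentVandermonde u).det = ∑ σ : Equiv.Perm (Fin (2 * N)), (Equiv.Perm.sign σ : ℤ) *
      ∏ a, u a ^ (σ (pairIdx (a, 0)) : ℕ) *
        ((σ (pairIdx (a, 1)) : ℕ) * u a ^ ((σ (pairIdx (a, 1)) : ℕ) - 1)) := by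
  rw [← det_transpose, det_apply']
  refine sum_congr rfl fun σ _ => ?_
  simp only [transpose_apply]
  rw [prod_pairIdx]
  simp [confluentVandermonde]

noncomputable def momentDerivMatrix (μ : Measure ℝ) : Matrix (Fin (2 * N)) (Fin (2 * N)) ℝ :=
  of fun k l => ∫ u, u ^ (k : ℕ) * ((l : ℕ) * u ^ ((l : ℕ) - 1)) ∂μ

theorem integral_det_confluentVandermonde (μ : Measure ℝ) [SigmaFinite μ]
    (hmom : ∀ m < 4 * N, Integrable (fun u : ℝ => u ^ m) μ) :
    ∫ u : Fin N → ℝ, (confluentVandermonde u).det ∂(Measure.pi fun _ => μ) =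
      pairingSum (fun _ : Fin N => momentDerivMatrix μ) := by
  have hint (k l : Fin (2 * N)) :
      Integrable (fun v : ℝ => v ^ (k : ℕ) * ((l : ℕ) * v ^ ((l : ℕ) - 1))) μ := by
    simp_rw [pow_mul_natCast_mul_pow_sub_one]
    exact (hmom _ (by omega)).const_mul _
  simp_rw [det_confluentVandermonde_eq_sum]
  rw [integral_finsetSum _ fun σ _ => (Integrable.fintype_prod fun a => hint _ _).const_mul _]
  refine sum_congr rfl fun σ _ => ?_
  rw [integral_const_mul, momentDerivMatrix]
  simp only [of_apply]
  congr 1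
  exact integral_fintype_prod_eq_prod fun a (v : ℝ) =>
    v ^ (σ (pairIdx (a, 0)) : ℕ) * ((σ (pairIdx (a, 1)) : ℕ) * v ^ ((σ (pairIdx (a, 1)) : ℕ) - 1))

lemma momentDerivMatrix_sub_transpose (μ : Measure ℝ) :
    momentDerivMatrix μ - (momentDerivMatrix μ)ᵀ = of fun k ℓ : Fin (2 * N) =>
      (((ℓ : ℕ) : ℝ) - ((k : ℕ) : ℝ)) * ∫ u : ℝ, u ^ ((k : ℕ) + (ℓ : ℕ) - 1) ∂μ := by
  ext k ℓ
  simp [momentDerivMatrix, pow_mul_natCast_mul_pow_sub_one, integral_const_mul, add_comm, sub_mul]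

end DeBruijn

open DeBruijn

theorem deBruijn_beta_four_general (N : ℕ) (μ : Measure ℝ) [IsProbabilityMeasure μ]
    (hmom : ∀ m : ℕ, m ≤ 4 * N → Integrable (fun u : ℝ => u ^ m) μ) :
    ((N.factorial : ℝ))⁻¹ *
        ∫ u : Fin N → ℝ, (∏ i : Fin N, ∏ j ∈ Finset.Ioi i, (u j - u i) ^ 4)
          ∂(Measure.pi fun _ => μ)
      = pfaffian (Matrix.of fun k ℓ : Fin (2 * N) =>
          (((ℓ : ℕ) : ℝ) - ((k : ℕ) : ℝ)) * ∫ u : ℝ, u ^ ((k : ℕ) + (ℓ : ℕ) - 1) ∂μ) := by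
  simp_rw [← det_confluentVandermonde]
  rw [integral_det_confluentVandermonde μ fun m hm => hmom m hm.le,
    ← momentDerivMatrix_sub_transpose, pfaffian_eq_pairingSum, pairingSum_sub_transpose]
  field_simp

/-- de Bruijn's identity for β = 4. -/
theorem deBruijn_beta_four (N : ℕ) (hN : 0 < N) (I : Set ℝ) (hI : I.OrdConnected)
    (μ : Measure ℝ) [IsProbabilityMeasure μ] (hsupp : μ Iᶜ = 0)
    (hmom : ∀ m : ℕ, m ≤ 4 * N → Integrable (fun u : ℝ => u ^ m) μ) :
    ((N.factorial : ℝ))⁻¹ *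
        ∫ u : Fin N → ℝ, (∏ i : Fin N, ∏ j ∈ Finset.Ioi i, (u j - u i) ^ 4)
          ∂(Measure.pi fun _ => μ)
      = pfaffian (Matrix.of fun k ℓ : Fin (2 * N) =>
          (((ℓ : ℕ) : ℝ) - ((k : ℕ) : ℝ)) * ∫ u : ℝ, u ^ ((k : ℕ) + (ℓ : ℕ) - 1) ∂μ) :=
  deBruijn_beta_four_general N μ hmom
end
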